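/- Let (P, ≤) be a preordered set with a compatible abelian group structure, R a principal ideal domain, and M a graded projective P-graded R[U₀]-module. Then every decomposable homogeneous element can be written in terms of indecomposable elements: for every k ∈ P and every x ∈ D_k there exist finitely many degrees ℓ_1, …, ℓ_m ∈ P with ℓ_t < k and indecomposable elements x_t ∈ M_{ℓ_t} (t = 1, …, m) such that x = Σ_{t=1}^m t^{k−ℓ_t} x_t. -/

import Mathlib

open scoped DirectSum

variable (P : Type) [AddCommGroup P] [Preorder P]
  [CovariantClass P P (· + ·) (· ≤ ·)] [DecidableEq P]
variable (R : Type) [CommRing R]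

/-- The monoid algebra `R[U₀]` on the submonoid `U₀` of nonnegative elements of `P`. -/
abbrev PersAlg : Type := AddMonoidAlgebra R ↥(AddSubmonoid.nonneg P)

/-- The monomial `t^p ∈ R[U₀]` for `p ≥ 0` (and `0` otherwise, a junk value). -/
noncomputable def tp (p : P) : PersAlg P R :=
  letI := Classical.dec (0 ≤ p)
  if h : 0 ≤ p then AddMonoidAlgebra.single (⟨p, h⟩ : ↥(AddSubmonoid.nonneg P)) 1 else 0

/-- A `P`-graded `R[U₀]`-module (persistence module): an `R[U₀]`-module together with an
internal direct sum decomposition `M = ⊕_{a ∈ P} M_a` into `R`-submodules such that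
`t^s • M_a ⊆ M_{a+s}` for all `s ≥ 0`. -/
structure PersMod : Type 1 where
  carrier : Type
  [isAddCommGroup : AddCommGroup carrier]
  [isModuleR : Module R carrier]
  [isModule : Module (PersAlg P R) carrier]
  [isTower : IsScalarTower R (PersAlg P R) carrier]
  deg : P → Submodule R carrier
  isInternal : DirectSum.IsInternal deg
  tp_smul_mem : ∀ (s : P), 0 ≤ s → ∀ (a : P) (x : carrier),
    x ∈ deg a → tp P R s • x ∈ deg (a + s)

attribute [instance] PersMod.isAddCommGroup PersMod.isModuleR PersMod.isModule PersMod.isTower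

/-- Scalar multiplication by a fixed element of `R[U₀]`, as an `R`-linear map. -/
noncomputable def smulMapR (M : PersMod P R) (a : PersAlg P R) : M.carrier →ₗ[R] M.carrier :=
  (LinearMap.lsmul (PersAlg P R) M.carrier a).restrictScalars R

/-- `D_r ⊆ M_r`, the sum of the images of all `M_q`, `q < r`, under `t^{r-q}`. -/
noncomputable def Dsub (M : PersMod P R) (r : P) : Submodule R M.carrier :=
  ⨆ q : {q : P // q < r}, Submodule.map (smulMapR P R M (tp P R (r - q.1))) (M.deg q.1)

/-- `M` is graded free: it admits an `R[U₀]`-basis of homogeneous elements. -/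
def IsGradedFree (M : PersMod P R) : Prop :=
  ∃ (Λ : Type) (d : Λ → P) (b : Module.Basis Λ (PersAlg P R) M.carrier),
    ∀ η, b η ∈ M.deg (d η)

/-- `M` is graded projective: it is a graded direct summand of a graded free module. -/
def IsGradedProjective (M : PersMod P R) : Prop :=
  ∃ F : PersMod P R, IsGradedFree P R F ∧
    ∃ (ι : M.carrier →ₗ[PersAlg P R] F.carrier) (π : F.carrier →ₗ[PersAlg P R] M.carrier),
      (∀ (a : P), ∀ x ∈ M.deg a, ι x ∈ F.deg a) ∧
      (∀ (a : P), ∀ x ∈ F.deg a, π x ∈ M.deg a) ∧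
      π.comp ι = LinearMap.id

/-- An `R[U₀]`-submodule `S` of a graded module `F` is graded if it is the sum of its
homogeneous parts `S ∩ F_a`. -/
def IsGradedSubmodule (F : PersMod P R) (S : Submodule (PersAlg P R) F.carrier) : Prop :=
  S.restrictScalars R = ⨆ a : P, (S.restrictScalars R ⊓ F.deg a)

/-- For a graded submodule `S ⊆ F`, the submodule `D_r` of sums of images of the homogeneous
pieces `S ∩ F_q`, `q < r`, under `t^{r-q}`. -/
noncomputable def DsubOf (F : PersMod P R) (S : Submodule (PersAlg P R) F.carrier) (r : P) :
    Submodule R F.carrier :=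
  ⨆ q : {q : P // q < r},
    Submodule.map (smulMapR P R F (tp P R (r - q.1))) (S.restrictScalars R ⊓ F.deg q.1)

/-!
Realise `M` as a graded retract `π ∘ ι = id` of a graded free module `F` with basis `b η` of
degree `d η`. Since `F_p` is spanned over `R` by the `t^s • b η` with `d η + s = p`, the `η`-th
coordinate of an element of `F_p` is `r • t^(p - d η)`; in particular every element of `D_{d η}`
has `η`-th coordinate `0`.

Given `y ∈ M_q`, write `y = ∑ c_η • π (b η)` with `c = b.repr (ι y)`, and let `d η` be maximal
among the degrees in the support of `c`. Reading off the `η`-th coordinate of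
`ι y = ∑ c_η' • ι (π (b η'))` gives `η₀` with `d η ≤ d η₀ ≤ d η` and `ι (π (b η₀))` having
nonzero `η`-th coordinate, so `t^(d η - d η₀) • π (b η₀)` is indecomposable in `M_{d η}`.
Hence each term of `t^(k - q) • y` has the form `t^(k - m) • z` with `z ∈ M_m` and `M_m`
containing an indecomposable `w`; if `z` is decomposable, `z = (z + w) + (-w)` splits it into
two indecomposables.
-/

theorem iSupIndep.le_of_iSup_inf_eq_top {ι α : Type*} [CompleteLattice α] [IsModularLattice α]
    {A B : ι → α} (hA : iSupIndep A) (hAB : ⨆ i, A i ⊓ B i = ⊤) (i : ι) : A i ≤ B i :=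
  calc A i = (A i ⊓ B i ⊔ ⨆ (j) (_ : j ≠ i), A j ⊓ B j) ⊓ A i := by
        rw [← iSup_split_single (fun j => A j ⊓ B j), hAB, top_inf_eq]
    _ = A i ⊓ B i := by
        rw [sup_inf_assoc_of_le _ inf_le_left, ((hA i).mono_right
          (iSup₂_mono fun j _ => inf_le_left)).symm.eq_bot, sup_bot_eq]
    _ ≤ B i := inf_le_right

theorem Module.Basis.eq_sum_repr_smul_of_comp_eq_id {A M F Λ : Type*} [Semiring A]
    [AddCommMonoid M] [Module A M] [AddCommMonoid F] [Module A F] (b : Module.Basis Λ A F)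
    {ι : M →ₗ[A] F} {π : F →ₗ[A] M} (hπι : π.comp ι = LinearMap.id) (y : M) :
    y = ∑ η ∈ (b.repr (ι y)).support, b.repr (ι y) η • π (b η) :=
  calc y = π (ι y) := by rw [← LinearMap.comp_apply π ι, hπι, LinearMap.id_apply]
    _ = _ := by
      conv_lhs => rw [← b.linearCombination_repr (ι y)]
      simp only [Finsupp.linearCombination_apply, Finsupp.sum, map_sum, map_smul]

section
variable {P R}
omit [DecidableEq P]

theorem tp_of_nonneg {p : P} (h : 0 ≤ p) :
    tp P R p = AddMonoidAlgebra.single (⟨p, h⟩ : AddSubmonoid.nonneg P) 1 :=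
  dif_pos h

theorem tp_of_not_nonneg {p : P} (h : ¬ 0 ≤ p) : tp P R p = 0 :=
  dif_neg h

theorem tp_zero : tp P R 0 = 1 :=
  tp_of_nonneg le_rfl

theorem tp_add {a b : P} (ha : 0 ≤ a) (hb : 0 ≤ b) : tp P R (a + b) = tp P R a * tp P R b := by
  rw [tp_of_nonneg ha, tp_of_nonneg hb, tp_of_nonneg (add_nonneg ha hb),
    AddMonoidAlgebra.single_mul_single, one_mul]
  rfl

theorem tp_sub_mul_tp_sub {a b c : P} (hab : b ≤ a) (hbc : c ≤ b) :
    tp P R (a - b) * tp P R (b - c) = tp P R (a - c) := by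
  rw [← tp_add (sub_nonneg.2 hab) (sub_nonneg.2 hbc), sub_add_sub_cancel]

theorem single_eq_smul_tp (s : AddSubmonoid.nonneg P) (r : R) :
    AddMonoidAlgebra.single s r = r • tp P R s := by
  rw [tp_of_nonneg s.2, AddMonoidAlgebra.smul_single', mul_one]

end

section
variable {P R} {F : PersMod P R} {Λ : Type} (b : Module.Basis Λ (PersAlg P R) F.carrier)
  (d : Λ → P)

/-- `F_p` described in coordinates, when `b` is homogeneous with degrees `d`. -/
noncomputable def basisDeg (p : P) : Submodule R F.carrier :=
  ⨅ η, (R ∙ tp P R (p - d η)).comap ((b.coord η).restrictScalars R)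

theorem mem_basisDeg {p : P} {v : F.carrier} :
    v ∈ basisDeg b d p ↔ ∀ η, ∃ r : R, r • tp P R (p - d η) = b.repr v η := by
  simp only [basisDeg, Submodule.mem_iInf, Submodule.mem_comap, Submodule.mem_span_singleton]
  rfl

theorem basis_mem_basisDeg (η : Λ) : b η ∈ basisDeg b d (d η) := by
  classical
  refine (mem_basisDeg b d).2 fun η' => ?_
  rw [b.repr_self, Finsupp.single_apply]
  split_ifs with h
  · exact ⟨1, by rw [h, sub_self, tp_zero, one_smul]⟩
  · exact ⟨0, zero_smul R _⟩

theorem tp_smul_mem_basisDeg {s p : P} (hs : 0 ≤ s) {v : F.carrier} (hv : v ∈ basisDeg b d p) :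
    tp P R s • v ∈ basisDeg b d (p + s) := by
  refine (mem_basisDeg b d).2 fun η => ?_
  obtain ⟨r, hr⟩ := (mem_basisDeg b d).1 hv η
  rw [map_smul, Finsupp.smul_apply, ← hr, smul_eq_mul, mul_smul_comm]
  by_cases hp : d η ≤ p
  · exact ⟨r, by rw [← tp_add hs (sub_nonneg.2 hp), add_sub_right_comm, add_comm s]⟩
  · exact ⟨0, by rw [tp_of_not_nonneg (R := R) (mt sub_nonneg.1 hp), mul_zero, smul_zero,
      zero_smul]⟩

variable {b d}

theorem iSup_deg_inf_basisDeg_eq_top (hb : ∀ η, b η ∈ F.deg (d η)) :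
    ⨆ p, F.deg p ⊓ basisDeg b d p = ⊤ := by
  set N := ⨆ p, F.deg p ⊓ basisDeg b d p
  have tp_smul_mem : ∀ s : P, 0 ≤ s → ∀ v ∈ N, tp P R s • v ∈ N := by
    intro s hs v hv
    refine Submodule.iSup_induction _ (motive := fun v => tp P R s • v ∈ N) hv ?_ ?_ ?_
    · exact fun p v hv => Submodule.mem_iSup_of_mem (p + s)
        ⟨F.tp_smul_mem s hs p v hv.1, tp_smul_mem_basisDeg b d hs hv.2⟩
    · simp only [smul_zero, zero_mem]
    · exact fun v w hv hw => by simpa only [smul_add] using add_mem hv hw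
  let N' : Submodule (PersAlg P R) F.carrier :=
    { N with
      smul_mem' := fun a v (hv : v ∈ N) => show a • v ∈ N by
        induction a using AddMonoidAlgebra.induction_linear with
        | zero => simp only [zero_smul, zero_mem]
        | add a a' ha ha' => simpa only [add_smul] using add_mem ha ha'
        | single s r =>
          rw [single_eq_smul_tp, smul_assoc]
          exact N.smul_mem r (tp_smul_mem s s.2 v hv) }
  have hN' : N' = ⊤ := by
    refine eq_top_iff.2 (b.span_eq ▸ Submodule.span_le.2 ?_)
    rintro _ ⟨η, rfl⟩
    exact Submodule.mem_iSup_of_mem (d η) ⟨hb η, basis_mem_basisDeg b d η⟩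
  exact eq_top_iff.2 fun v _ => (hN' ▸ Submodule.mem_top : v ∈ N')

theorem deg_le_basisDeg (hb : ∀ η, b η ∈ F.deg (d η)) (p : P) : F.deg p ≤ basisDeg b d p :=
  F.isInternal.submodule_iSupIndep.le_of_iSup_inf_eq_top (iSup_deg_inf_basisDeg_eq_top hb) p

theorem exists_repr_apply_eq_smul_tp (hb : ∀ η, b η ∈ F.deg (d η)) {p : P} {v : F.carrier}
    (hv : v ∈ F.deg p) (η : Λ) : ∃ r : R, b.repr v η = r • tp P R (p - d η) :=
  ((mem_basisDeg b d).1 (deg_le_basisDeg hb p hv) η).imp fun _ h => h.symm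

theorem le_of_repr_apply_ne_zero (hb : ∀ η, b η ∈ F.deg (d η)) {p : P} {v : F.carrier}
    (hv : v ∈ F.deg p) {η : Λ} (hη : b.repr v η ≠ 0) : d η ≤ p := by
  obtain ⟨r, hr⟩ := exists_repr_apply_eq_smul_tp hb hv η
  by_contra h
  rw [tp_of_not_nonneg (mt sub_nonneg.1 h), smul_zero] at hr
  exact hη hr

theorem repr_apply_eq_zero_of_mem_Dsub (hb : ∀ η, b η ∈ F.deg (d η)) {η : Λ} {v : F.carrier}
    (hv : v ∈ Dsub P R F (d η)) : b.repr v η = 0 := by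
  refine Submodule.iSup_induction _ (motive := fun v => b.repr v η = 0) hv ?_ ?_ ?_
  · rintro ⟨q, hq⟩ _ ⟨u, hu, rfl⟩
    obtain ⟨r, hr⟩ := exists_repr_apply_eq_smul_tp hb hu η
    change b.repr (tp P R _ • u) η = 0
    rw [map_smul, Finsupp.smul_apply, hr, tp_of_not_nonneg (R := R) (mt sub_nonneg.1 hq.not_ge),
      smul_zero, smul_zero]
  · rw [map_zero, Finsupp.zero_apply]
  · intro v w hv hw
    rw [map_add, Finsupp.add_apply, hv, hw, add_zero]

theorem map_mem_Dsub {M N : PersMod P R} (f : M.carrier →ₗ[PersAlg P R] N.carrier)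
    (hf : ∀ a, ∀ x ∈ M.deg a, f x ∈ N.deg a) {k : P} {x : M.carrier} (hx : x ∈ Dsub P R M k) :
    f x ∈ Dsub P R N k := by
  refine Submodule.iSup_induction _ (motive := fun x => f x ∈ Dsub P R N k) hx ?_ ?_ ?_
  · rintro q _ ⟨u, hu, rfl⟩
    exact Submodule.mem_iSup_of_mem q ⟨f u, hf _ u hu, (f.map_smul _ u).symm⟩
  · rw [map_zero]
    exact zero_mem _
  · intro x y hx hy
    rw [map_add]
    exact add_mem hx hy

def indecomposableShifts (M : PersMod P R) (k : P) : Set M.carrier :=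
  {x | ∃ ℓ < k, ∃ z ∈ M.deg ℓ, z ∉ Dsub P R M ℓ ∧ tp P R (k - ℓ) • z = x}

theorem exists_sum_of_mem_closure_indecomposableShifts {M : PersMod P R} {k : P} {x : M.carrier}
    (hx : x ∈ AddSubmonoid.closure (indecomposableShifts M k)) :
    ∃ (m : ℕ) (ℓ : Fin m → P) (z : Fin m → M.carrier),
      (∀ t, ℓ t < k) ∧ (∀ t, z t ∈ M.deg (ℓ t)) ∧ (∀ t, z t ∉ Dsub P R M (ℓ t)) ∧
      x = ∑ t, tp P R (k - ℓ t) • z t := by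
  obtain ⟨l, hl, rfl⟩ := AddSubmonoid.exists_list_of_mem_closure hx
  choose ℓ hℓ z hz hzD hlz using fun t : Fin l.length => hl _ (List.getElem_mem t.2)
  refine ⟨l.length, ℓ, z, hℓ, hz, hzD, ?_⟩
  simp only [hlz, Fin.sum_univ_getElem]

theorem tp_smul_mem_closure_indecomposableShifts {M : PersMod P R} {k ℓ : P} (hℓ : ℓ < k)
    {w : M.carrier} (hw : w ∈ M.deg ℓ) (hwD : w ∉ Dsub P R M ℓ) {z : M.carrier}
    (hz : z ∈ M.deg ℓ) : tp P R (k - ℓ) • z ∈ AddSubmonoid.closure (indecomposableShifts M k) := by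
  by_cases hzD : z ∈ Dsub P R M ℓ
  · have hzw : z + w ∉ Dsub P R M ℓ := fun h => hwD (by simpa using sub_mem h hzD)
    have hw' : -w ∉ Dsub P R M ℓ := fun h => hwD (by simpa using neg_mem h)
    rw [← add_neg_cancel_right z w, smul_add]
    exact add_mem
      (AddSubmonoid.subset_closure ⟨ℓ, hℓ, z + w, add_mem hz hw, hzw, rfl⟩)
      (AddSubmonoid.subset_closure ⟨ℓ, hℓ, -w, neg_mem hw, hw', rfl⟩)
  · exact AddSubmonoid.subset_closure ⟨ℓ, hℓ, z, hz, hzD, rfl⟩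

section GradedRetract

variable {M : PersMod P R} (hb : ∀ η, b η ∈ F.deg (d η))
  {ι : M.carrier →ₗ[PersAlg P R] F.carrier} {π : F.carrier →ₗ[PersAlg P R] M.carrier}
  (hι : ∀ a, ∀ x ∈ M.deg a, ι x ∈ F.deg a) (hπ : ∀ a, ∀ x ∈ F.deg a, π x ∈ M.deg a)
  (hπι : π.comp ι = LinearMap.id)
include hb hι hπ hπι

theorem exists_indecomposable_of_maximal (y : M.carrier) {η : Λ} (hη : b.repr (ι y) η ≠ 0)
    (hmax : ∀ η', b.repr (ι y) η' ≠ 0 → d η ≤ d η' → d η' ≤ d η) :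
    ∃ w ∈ M.deg (d η), w ∉ Dsub P R M (d η) := by
  have hc : b.repr (ι y) η = ∑ η' ∈ (b.repr (ι y)).support,
      b.repr (ι y) η' * b.repr (ι (π (b η'))) η := by
    conv_lhs => rw [b.eq_sum_repr_smul_of_comp_eq_id hπι y]
    simp only [map_sum, map_smul, Finsupp.finsetSum_apply, Finsupp.smul_apply, smul_eq_mul]
  obtain ⟨η₀, -, hne⟩ := Finset.exists_ne_zero_of_sum_ne_zero (hc ▸ hη)
  set γ := b.repr (ι (π (b η₀))) η
  have hγ : γ ≠ 0 := right_ne_zero_of_mul hne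
  have hle : d η ≤ d η₀ := le_of_repr_apply_ne_zero hb (hι _ _ (hπ _ _ (hb η₀))) hγ
  have hge : d η₀ ≤ d η := hmax η₀ (left_ne_zero_of_mul hne) hle
  refine ⟨tp P R (d η - d η₀) • π (b η₀), ?_, fun hD => hγ ?_⟩
  · simpa using M.tp_smul_mem _ (sub_nonneg.2 hge) _ _ (hπ _ _ (hb η₀))
  · have h0 := repr_apply_eq_zero_of_mem_Dsub hb (map_mem_Dsub ι hι hD)
    rw [map_smul, map_smul, Finsupp.smul_apply, smul_eq_mul] at h0
    calc γ = tp P R (d η₀ - d η) * tp P R (d η - d η₀) * γ := by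
          rw [tp_sub_mul_tp_sub hle hge, sub_self, tp_zero, one_mul]
      _ = 0 := by rw [mul_assoc, h0, mul_zero]

theorem exists_indecomposable_between {q : P} {y : M.carrier} (hy : y ∈ M.deg q) {η : Λ}
    (hη : b.repr (ι y) η ≠ 0) :
    ∃ m, d η ≤ m ∧ m ≤ q ∧ ∃ w ∈ M.deg m, w ∉ Dsub P R M m := by
  classical
  obtain ⟨m, hηm, hm⟩ := ((b.repr (ι y)).support.image d).exists_le_maximal
    (Finset.mem_image_of_mem d (Finsupp.mem_support_iff.2 hη))
  obtain ⟨η₁, hη₁, rfl⟩ := Finset.mem_image.1 hm.1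
  refine ⟨d η₁, hηm, le_of_repr_apply_ne_zero hb (hι _ _ hy) (Finsupp.mem_support_iff.1 hη₁),
    exists_indecomposable_of_maximal hb hι hπ hπι y (Finsupp.mem_support_iff.1 hη₁)
      fun η' hη' => hm.2 (Finset.mem_image_of_mem d (Finsupp.mem_support_iff.2 hη'))⟩

theorem tp_smul_mem_closure_indecomposableShifts_of_retract {k q : P} (hq : q < k)
    {y : M.carrier} (hy : y ∈ M.deg q) :
    tp P R (k - q) • y ∈ AddSubmonoid.closure (indecomposableShifts M k) := by
  rw [b.eq_sum_repr_smul_of_comp_eq_id hπι y, Finset.smul_sum]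
  refine sum_mem fun η hη => ?_
  obtain ⟨r, hr⟩ := exists_repr_apply_eq_smul_tp hb (hι _ _ hy) η
  obtain ⟨m, hηm, hmq, w, hw, hwD⟩ :=
    exists_indecomposable_between hb hι hπ hπι hy (Finsupp.mem_support_iff.1 hη)
  have hshift : tp P R (k - q) • (b.repr (ι y) η • π (b η)) =
      tp P R (k - m) • ((r • tp P R (m - d η)) • π (b η)) := by
    rw [hr, ← mul_smul, ← mul_smul, mul_smul_comm, mul_smul_comm,
      tp_sub_mul_tp_sub hq.le (hηm.trans hmq), tp_sub_mul_tp_sub (hmq.trans_lt hq).le hηm]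
  rw [hshift]
  refine tp_smul_mem_closure_indecomposableShifts (hmq.trans_lt hq) hw hwD ?_
  rw [smul_assoc]
  exact Submodule.smul_mem _ r
    (by simpa using M.tp_smul_mem _ (sub_nonneg.2 hηm) _ _ (hπ _ _ (hb η)))

end GradedRetract

theorem Dsub_subset_closure_indecomposableShifts {M : PersMod P R}
    (hM : IsGradedProjective P R M) (k : P) :
    (Dsub P R M k : Set M.carrier) ⊆ AddSubmonoid.closure (indecomposableShifts M k) := by
  obtain ⟨F, ⟨Λ, d, b, hb⟩, ι, π, hι, hπ, hπι⟩ := hM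
  intro x hx
  refine Submodule.iSup_induction _ (motive := (· ∈ AddSubmonoid.closure _)) hx ?_
    (zero_mem _) (fun _ _ => add_mem)
  rintro ⟨q, hq⟩ _ ⟨y, hy, rfl⟩
  exact tp_smul_mem_closure_indecomposableShifts_of_retract hb hι hπ hπι hq hy

end

theorem decomposable_eq_sum_indecomposables
    (M : PersMod P R) (hproj : IsGradedProjective P R M)
    (k : P) (x : M.carrier) (hx : x ∈ Dsub P R M k) :
    ∃ (m : ℕ) (ℓ : Fin m → P) (z : Fin m → M.carrier),
      (∀ t, ℓ t < k) ∧ (∀ t, z t ∈ M.deg (ℓ t)) ∧ (∀ t, z t ∉ Dsub P R M (ℓ t)) ∧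
      x = ∑ t, tp P R (k - ℓ t) • z t :=
  exists_sum_of_mem_closure_indecomposableShifts
    (Dsub_subset_closure_indecomposableShifts hproj k hx)
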